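/- Let $m \ge 2$ be an integer, $r > 0$, $\lambda \in \mathbb{R}$, and $r_1, r_2 \in (0, r)$ with $r_1^2 + r_2^2 = r^2$. Then the two conditions $-\frac{r_2}{r_1}(m-1) + \frac{r_1}{r_2} \ne 0$ and $\frac{r_2^2}{r_1^2}(m-1) + \frac{r_1^2}{r_2^2} = m - \lambda r^2$ hold simultaneously if and only if one of the following three cases holds: (1) $m > 2$, $\lambda = (m - 2\sqrt{m-1})/r^2$, $r_1^2 = \frac{m-1-\sqrt{m-1}}{m-2} r^2$ and $r_2^2 = \frac{\sqrt{m-1}-1}{m-2} r^2$; (2) $\lambda < (m - 2\sqrt{m-1})/r^2$, $\lambda \ne 0$, and for a consistent choice of sign, $r_1^2 = \frac{3m - 2 - \lambda r^2 \mp \sqrt{(m - \lambda r^2)^2 - 4(m-1)}}{2(2m - \lambda r^2)} r^2$ and $r_2^2 = \frac{m + 2 - \lambda r^2 \pm \sqrt{(m - \lambda r^2)^2 - 4(m-1)}}{2(2m - \lambda r^2)} r^2$; (3) $m > 2$, $\lambda = 0$, and $r_1^2 = r_2^2 = r^2/2$. -/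

import Mathlib

/-!
Put `x = r₁²`, `y = r₂²`, `s = λ r²`. The two conditions say that `t = x / y` is a root of
`t² - (m - s) t + (m - 1) = 0` other than `m - 1`. The product of the roots is `m - 1`, so the
root `m - 1` comes together with the root `1`, which happens exactly when `s = 0`. A positive
root exists iff `s < m` and the discriminant `D = (m - s)² - 4(m - 1)` is nonnegative, i.e. iff
`s ≤ m - 2√(m - 1)`: `D = 0` gives the double root `√(m - 1)` (case 1), `D > 0` the roots
`(m - s ± √D) / 2` (case 2, and case 3 when `s = 0`), and `x + y = r²` then determines `x`, `y`.
-/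

open Real

section Quadratic

variable {M s x y R c d : ℝ}

lemma quad_eq_iff_sq_eq :
    x * x + (M - 1) * (y * y) = (M - s) * (x * y) ↔
      (2 * x - (M - s) * y) ^ 2 = ((M - s) ^ 2 - 4 * (M - 1)) * y ^ 2 := by
  constructor <;> intro h
  · linear_combination 4 * h
  · linear_combination h / 4

lemma sub_pos_of_quad_eq (hM : 1 ≤ M) (hx : 0 < x) (hy : 0 < y)
    (h : x * x + (M - 1) * (y * y) = (M - s) * (x * y)) : 0 < M - s := by
  nlinarith [mul_pos hx hy, mul_pos hx hx, mul_pos hy hy]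

lemma disc_eq_mul (hM : 1 ≤ M) :
    (M - s) ^ 2 - 4 * (M - 1) = (M - s - 2 * √(M - 1)) * (M - s + 2 * √(M - 1)) := by
  linear_combination 4 * sq_sqrt (sub_nonneg.mpr hM)

lemma disc_pos_iff (hM : 1 ≤ M) (hMs : 0 ≤ M - s) :
    0 < (M - s) ^ 2 - 4 * (M - 1) ↔ s < M - 2 * √(M - 1) := by
  have hc := sqrt_nonneg (M - 1)
  rw [disc_eq_mul hM]
  constructor
  · intro h
    by_contra! h'
    nlinarith
  · intro h
    apply mul_pos <;> linarith

lemma disc_eq_zero_iff (hM : 1 ≤ M) (hMs : 0 < M - s) :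
    (M - s) ^ 2 - 4 * (M - 1) = 0 ↔ s = M - 2 * √(M - 1) := by
  have hc := sqrt_nonneg (M - 1)
  rw [disc_eq_mul hM, mul_eq_zero, or_iff_left (by linarith)]
  constructor <;> intro h <;> linarith

lemma quad_eq_iff_roots (hM : 1 ≤ M) (hx : 0 < x) (hy : 0 < y) :
    x * x + (M - 1) * (y * y) = (M - s) * (x * y) ↔
      (s = M - 2 * √(M - 1) ∧ x = √(M - 1) * y) ∨
      (s < M - 2 * √(M - 1) ∧
        (2 * x = (M - s - √((M - s) ^ 2 - 4 * (M - 1))) * y ∨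
          2 * x = (M - s + √((M - s) ^ 2 - 4 * (M - 1))) * y)) := by
  have hc := sq_sqrt (sub_nonneg.mpr hM)
  constructor
  · intro h
    have hMs := sub_pos_of_quad_eq hM hx hy h
    have key := quad_eq_iff_sq_eq.mp h
    have hD : 0 ≤ (M - s) ^ 2 - 4 * (M - 1) :=
      nonneg_of_mul_nonneg_left (key ▸ sq_nonneg _) (pow_pos hy 2)
    rcases hD.eq_or_lt with hD | hD
    · have hs := (disc_eq_zero_iff hM hMs).mp hD.symm
      refine .inl ⟨hs, ?_⟩
      rw [← hD, zero_mul, sq_eq_zero_iff, hs] at key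
      linear_combination key / 2
    · refine .inr ⟨(disc_pos_iff hM hMs.le).mp hD, ?_⟩
      rw [← sq_sqrt hD.le, ← mul_pow, sq_eq_sq_iff_eq_or_eq_neg] at key
      rcases key with key | key
      · right; linear_combination key
      · left; linear_combination key
  · rintro (⟨rfl, rfl⟩ | ⟨hs, hroot⟩)
    · linear_combination (-(y * y)) * hc
    · have hMs : 0 ≤ M - s := by linarith [sqrt_nonneg (M - 1)]
      have hd := sq_sqrt ((disc_pos_iff hM hMs).mpr hs).le
      set d := √((M - s) ^ 2 - 4 * (M - 1))
      rw [quad_eq_iff_sq_eq]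
      rcases hroot with h | h
      · linear_combination (2 * x - (M - s) * y - d * y) * h + y ^ 2 * hd
      · linear_combination (2 * x - (M - s) * y + d * y) * h + y ^ 2 * hd

lemma quad_eq_iff_eq_or_eq_mul :
    x * x + (M - 1) * (y * y) = M * (x * y) ↔ x = y ∨ x = (M - 1) * y := by
  rw [← sub_eq_zero, ← sub_eq_zero (a := x), ← sub_eq_zero (a := x), ← mul_eq_zero]
  constructor <;> intro h <;> linear_combination h

lemma eq_zero_of_quad_eq_of_eq_mul (hM : M ≠ 1) (hy : y ≠ 0)
    (h : x * x + (M - 1) * (y * y) = (M - s) * (x * y)) (hx : x = (M - 1) * y) : s = 0 := by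
  subst hx
  have : (M - 1) * y ^ 2 * s = 0 := by linear_combination h
  simpa [sub_eq_zero, hM, hy] using this

lemma quad_classification_of_eq_zero (hM : 2 ≤ M) (hy : 0 < y) (hxy : x + y = R) :
    (x ≠ (M - 1) * y ∧ x * x + (M - 1) * (y * y) = (M - 0) * (x * y)) ↔
      2 < M ∧ x = R / 2 ∧ y = R / 2 := by
  rw [sub_zero, quad_eq_iff_eq_or_eq_mul]
  constructor
  · rintro ⟨hne, rfl | h⟩
    · refine ⟨lt_of_le_of_ne hM ?_, by linarith, by linarith⟩
      rintro rfl
      exact hne (by ring)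
    · exact absurd h hne
  · rintro ⟨hM2, hx, hy'⟩
    refine ⟨fun h => ?_, .inl (by linarith)⟩
    nlinarith

/-- The denominator `2 (2M - s)` rationalizes `x = t / (t + 1) * R`, `t = (M - s - d) / 2`, using
`(M - s - d + 2) (M - s + d + 2) = 4 (2M - s)`. -/
lemma two_mul_eq_iff_of_add_eq (hd : d ^ 2 = (M - s) ^ 2 - 4 * (M - 1))
    (hMs : 2 * M - s ≠ 0) (hxy : x + y = R) :
    2 * x = (M - s - d) * y ↔
      x = (3 * M - 2 - s - d) / (2 * (2 * M - s)) * R ∧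
        y = (M + 2 - s + d) / (2 * (2 * M - s)) * R := by
  have h2 : 2 * (2 * M - s) ≠ 0 := mul_ne_zero two_ne_zero hMs
  constructor
  · intro h
    constructor <;> rw [div_mul_eq_mul_div, eq_div_iff h2]
    · linear_combination ((M - s + d + 2) / 2) * h + (3 * M - s - d - 2) * hxy - (y / 2) * hd
    · linear_combination (-((M - s + d + 2) / 2)) * h + (M - s + d + 2) * hxy + (y / 2) * hd
  · rintro ⟨rfl, rfl⟩
    field_simp
    linear_combination R * hd

lemma eq_mul_iff_of_add_eq (hM : M ≠ 2) (hc : c ^ 2 = M - 1) (hxy : x + y = R) :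
    x = c * y ↔ x = (M - 1 - c) / (M - 2) * R ∧ y = (c - 1) / (M - 2) * R := by
  have hM2 : M - 2 ≠ 0 := sub_ne_zero.mpr hM
  constructor
  · intro h
    constructor <;> rw [div_mul_eq_mul_div, eq_div_iff hM2]
    · linear_combination (M - 1 - c) * hxy + (c - 1) * h + y * hc
    · linear_combination (c - 1) * hxy + (1 - c) * h - y * hc
  · rintro ⟨rfl, rfl⟩
    field_simp
    linear_combination -R * hc

theorem quad_classification (hM : 2 ≤ M) (hx : 0 < x) (hy : 0 < y) (hxy : x + y = R) :
    (x ≠ (M - 1) * y ∧ x * x + (M - 1) * (y * y) = (M - s) * (x * y)) ↔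
    ((2 < M ∧ s = M - 2 * √(M - 1) ∧
        x = ((M - 1 - √(M - 1)) / (M - 2)) * R ∧
        y = ((√(M - 1) - 1) / (M - 2)) * R) ∨
     (s < M - 2 * √(M - 1) ∧ s ≠ 0 ∧
        ((x = ((3 * M - 2 - s - √((M - s) ^ 2 - 4 * (M - 1))) / (2 * (2 * M - s))) * R ∧
          y = ((M + 2 - s + √((M - s) ^ 2 - 4 * (M - 1))) / (2 * (2 * M - s))) * R) ∨
         (x = ((3 * M - 2 - s + √((M - s) ^ 2 - 4 * (M - 1))) / (2 * (2 * M - s))) * R ∧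
          y = ((M + 2 - s - √((M - s) ^ 2 - 4 * (M - 1))) / (2 * (2 * M - s))) * R))) ∨
     (2 < M ∧ s = 0 ∧ x = R / 2 ∧ y = R / 2)) := by
  have hc := sq_sqrt (by linarith : (0 : ℝ) ≤ M - 1)
  by_cases hs : s = 0
  · subst hs
    refine (quad_classification_of_eq_zero hM hy hxy).trans
      ⟨fun h => .inr (.inr ⟨h.1, rfl, h.2⟩), ?_⟩
    rintro (⟨hM2, h0, -⟩ | ⟨-, h0, -⟩ | ⟨hM2, -, h⟩)
    · nlinarith
    · exact absurd rfl h0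
    · exact ⟨hM2, h⟩
  · rw [and_iff_right_of_imp
        (fun h hx' => hs (eq_zero_of_quad_eq_of_eq_mul (by linarith) hy.ne' h hx')),
      quad_eq_iff_roots (by linarith) hx hy]
    simp only [hs, false_and, and_false, or_false, ne_eq, not_false_eq_true, true_and]
    refine or_congr ⟨fun ⟨hs', hxc⟩ => ?_, fun ⟨hM2, hs', hxc⟩ => ?_⟩
      (and_congr_right fun hslt => ?_)
    · have hM2 : M ≠ 2 := by
        rintro rfl
        norm_num at hs'
        exact hs hs'
      exact ⟨lt_of_le_of_ne hM hM2.symm, hs', (eq_mul_iff_of_add_eq hM2 hc hxy).mp hxc⟩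
    · exact ⟨hs', (eq_mul_iff_of_add_eq hM2.ne' hc hxy).mpr hxc⟩
    · have hc0 := sqrt_nonneg (M - 1)
      have hMs : 2 * M - s ≠ 0 := by linarith
      have hd := sq_sqrt ((disc_pos_iff (by linarith) (by linarith)).mpr hslt).le
      have hplus := two_mul_eq_iff_of_add_eq (by rw [neg_sq]; exact hd) hMs hxy
      simp only [sub_neg_eq_add, ← sub_eq_add_neg] at hplus
      rw [two_mul_eq_iff_of_add_eq hd hMs hxy, hplus]

end Quadratic

lemma neg_div_mul_add_div_ne_zero_iff {a b k : ℝ} (ha : a ≠ 0) (hb : b ≠ 0) :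
    -(b / a) * k + a / b ≠ 0 ↔ a ^ 2 ≠ k * b ^ 2 := by
  rw [ne_eq, ne_eq, not_iff_not, ← sub_eq_zero (a := a ^ 2)]
  constructor <;> intro h
  · field_simp at h
    linear_combination h
  · field_simp
    linear_combination h

lemma div_sq_mul_add_div_sq_eq_iff {a b k L : ℝ} (ha : a ≠ 0) (hb : b ≠ 0) :
    b ^ 2 / a ^ 2 * k + a ^ 2 / b ^ 2 = L ↔
      a ^ 2 * a ^ 2 + k * (b ^ 2 * b ^ 2) = L * (a ^ 2 * b ^ 2) := by
  rw [div_mul_eq_mul_div, div_add_div _ _ (pow_ne_zero 2 ha) (pow_ne_zero 2 hb),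
    div_eq_iff (by positivity)]
  constructor <;> intro h <;> linear_combination h

theorem lambda_biharmonic_product_classification
    (m : ℕ) (hm : 2 ≤ m) (r l r1 r2 : ℝ)
    (hr1 : r1 ∈ Set.Ioo 0 r) (hr2 : r2 ∈ Set.Ioo 0 r)
    (hsum : r1 ^ 2 + r2 ^ 2 = r ^ 2) :
    (-(r2 / r1) * ((m : ℝ) - 1) + r1 / r2 ≠ 0 ∧
      (r2 ^ 2 / r1 ^ 2) * ((m : ℝ) - 1) + r1 ^ 2 / r2 ^ 2 = (m : ℝ) - l * r ^ 2) ↔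
    ((2 < m ∧ l = ((m : ℝ) - 2 * Real.sqrt ((m : ℝ) - 1)) / r ^ 2 ∧
        r1 ^ 2 = (((m : ℝ) - 1 - Real.sqrt ((m : ℝ) - 1)) / ((m : ℝ) - 2)) * r ^ 2 ∧
        r2 ^ 2 = ((Real.sqrt ((m : ℝ) - 1) - 1) / ((m : ℝ) - 2)) * r ^ 2) ∨
     (l < ((m : ℝ) - 2 * Real.sqrt ((m : ℝ) - 1)) / r ^ 2 ∧ l ≠ 0 ∧
        ((r1 ^ 2 = ((3 * (m : ℝ) - 2 - l * r ^ 2 -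
              Real.sqrt (((m : ℝ) - l * r ^ 2) ^ 2 - 4 * ((m : ℝ) - 1))) /
              (2 * (2 * (m : ℝ) - l * r ^ 2))) * r ^ 2 ∧
          r2 ^ 2 = (((m : ℝ) + 2 - l * r ^ 2 +
              Real.sqrt (((m : ℝ) - l * r ^ 2) ^ 2 - 4 * ((m : ℝ) - 1))) /
              (2 * (2 * (m : ℝ) - l * r ^ 2))) * r ^ 2) ∨
         (r1 ^ 2 = ((3 * (m : ℝ) - 2 - l * r ^ 2 +
              Real.sqrt (((m : ℝ) - l * r ^ 2) ^ 2 - 4 * ((m : ℝ) - 1))) /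
              (2 * (2 * (m : ℝ) - l * r ^ 2))) * r ^ 2 ∧
          r2 ^ 2 = (((m : ℝ) + 2 - l * r ^ 2 -
              Real.sqrt (((m : ℝ) - l * r ^ 2) ^ 2 - 4 * ((m : ℝ) - 1))) /
              (2 * (2 * (m : ℝ) - l * r ^ 2))) * r ^ 2))) ∨
     (2 < m ∧ l = 0 ∧ r1 ^ 2 = r ^ 2 / 2 ∧ r2 ^ 2 = r ^ 2 / 2)) := by
  have hR : r ^ 2 ≠ 0 := pow_ne_zero 2 (hr1.1.trans hr1.2).ne'
  rw [neg_div_mul_add_div_ne_zero_iff hr1.1.ne' hr2.1.ne',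
    div_sq_mul_add_div_sq_eq_iff hr1.1.ne' hr2.1.ne',
    quad_classification (by exact_mod_cast hm) (pow_pos hr1.1 2) (pow_pos hr2.1 2) hsum,
    Nat.ofNat_lt_cast, ← eq_div_iff hR, ← lt_div_iff₀ (by positivity), ne_eq,
    mul_eq_zero_iff_right hR]
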